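/- arXiv:1606.01723 — 3 statements merged into one kernel-verified Lean document; each statement's English description precedes it below -/
import Mathlib

section
/- Let V be a real reflexive Banach space, T > 0, and let A, A′ : [0,T] → L(V;V′) be bounded maps into the continuous linear operators from V to its dual, such that for every v₁, v₂ ∈ V the function t ↦ ⟨A(t)v₁, v₂⟩_{V′,V} is absolutely continuous on [0,T] with derivative ⟨A′(t)v₁, v₂⟩_{V′,V} for a.e. t. Assume A(t) is symmetric for each t, i.e. ⟨A(t)v₁,v₂⟩ = ⟨A(t)v₂,v₁⟩. Let u : [0,T] → V be absolutely continuous with Bochner-integrable derivative u′ ∈ L¹(0,T;V) (i.e. u ∈ W^{1,1}(0,T;V)). Then the function g(t) = ⟨A(t)u(t), u(t)⟩_{V′,V} is absolutely continuous on [0,T] with derivative g′(t) = ⟨A′(t)u(t), u(t)⟩_{V′,V} + 2⟨A(t)u(t), u′(t)⟩_{V′,V} for almost every t; equivalently, for all 0 ≤ t₀ < t₁ ≤ T, ⟨A(t₁)u(t₁),u(t₁)⟩ − ⟨A(t₀)u(t₀),u(t₀)⟩ = ∫_{t₀}^{t₁} ⟨A′(t)u(t),u(t)⟩ + 2⟨A(t)u(t),u′(t)⟩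 dt. -/
/-!
The key step is a product rule for `t ↦ Φ(t)(y(t))`, where `y` is the integral of `y'` but the
operator family `Φ` is only *weakly* absolutely continuous (each `t ↦ Φ(t) w` is the integral of
`Φ'(t) w`), so that `Φ'` need not be Bochner integrable. Writing `y(b) = y(s) + ∫ₛᵇ y'` inside
`∫ₐᵇ Φ'(s) y(b) ds` and exchanging the order of integration over the triangle `a ≤ s ≤ t ≤ b`
turns `∫ₐᵗ Φ'(s) y'(t) ds` into `(Φ(t) - Φ(a)) y'(t)`, which gives
`Φ(b) y(b) - Φ(a) y(a) = ∫ₐᵇ Φ' y + Φ y'`. Applied first to `Φ(t) = A(t)(·)(w)` and `x`, then to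
`Φ(t) = A(t)(x(t))` and `y`, it yields the three-term rule for `A(t)(x(t))(y(t))`; with `x = y = u`
the symmetry of `A(t)` merges the two terms containing `u'`.
-/

open MeasureTheory Set

/-- Only the curves `t ↦ B t v` are assumed measurable, not `B` as an operator-valued map: the
proof approximates `f` by simple functions. -/
theorem MeasureTheory.AEStronglyMeasurable.clm_apply_of_forall {α E F : Type*}
    [MeasurableSpace α] {μ : Measure α} [NormedAddCommGroup E] [NormedSpace ℝ E]
    [NormedAddCommGroup F] [NormedSpace ℝ F] {B : α → E →L[ℝ] F} {f : α → E}
    (hB : ∀ v, AEStronglyMeasurable (fun t => B t v) μ) (hf : AEStronglyMeasurable f μ) :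
    AEStronglyMeasurable (fun t => B t (f t)) μ := by
  obtain ⟨g, hg, hfg⟩ := hf
  have h_simple (s : SimpleFunc α E) : AEStronglyMeasurable (fun t => B t (s t)) μ := by
    induction s using SimpleFunc.induction with
    | @const c S hS =>
      convert (hB c).indicator hS using 1
      ext t
      by_cases ht : t ∈ S <;> simp [ht]
    | @add s₁ s₂ _ h₁ h₂ =>
      convert h₁.add h₂ using 1
      ext t
      simp
  refine (aestronglyMeasurable_of_tendsto_ae Filter.atTop (fun n => h_simple (hg.approx n))
    (Filter.Eventually.of_forall fun t => ((B t).continuous.tendsto _).comp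
      (hg.tendsto_approx t))).congr ?_
  filter_upwards [hfg] with t ht
  rw [ht]

theorem MeasureTheory.Integrable.clm_apply_of_norm_le {α E F : Type*} [MeasurableSpace α]
    {μ : Measure α}
    [NormedAddCommGroup E] [NormedSpace ℝ E] [NormedAddCommGroup F] [NormedSpace ℝ F]
    {B : α → E →L[ℝ] F} {f : α → E} {g : α → ℝ}
    (hB : ∀ v, AEStronglyMeasurable (fun t => B t v) μ) (hf : AEStronglyMeasurable f μ)
    (hg : Integrable g μ) (hle : ∀ᵐ t ∂μ, ‖B t‖ * ‖f t‖ ≤ g t) :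
    Integrable (fun t => B t (f t)) μ :=
  hg.mono' (hf.clm_apply_of_forall hB)
    (hle.mono fun t ht => ((B t).le_opNorm (f t)).trans ht)

theorem IntervalIntegrable.clm_apply_of_norm_le {E F : Type*} [NormedAddCommGroup E]
    [NormedSpace ℝ E] [NormedAddCommGroup F] [NormedSpace ℝ F] {B : ℝ → E →L[ℝ] F}
    {f : ℝ → E} {g : ℝ → ℝ} {a b : ℝ} (hab : a ≤ b)
    (hB : ∀ v, AEStronglyMeasurable (fun t => B t v) (volume.restrict (Ioc a b)))
    (hf : AEStronglyMeasurable f (volume.restrict (Ioc a b)))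
    (hg : IntervalIntegrable g volume a b) (hle : ∀ t ∈ Ioc a b, ‖B t‖ * ‖f t‖ ≤ g t) :
    IntervalIntegrable (fun t => B t (f t)) volume a b :=
  (intervalIntegrable_iff_integrableOn_Ioc_of_le hab).2 <|
    Integrable.clm_apply_of_norm_le hB hf hg.1 (ae_restrict_of_forall_mem measurableSet_Ioc hle)

theorem integral_integral_triangle_swap {E : Type*} [NormedAddCommGroup E] [NormedSpace ℝ E]
    {a b : ℝ} (hab : a ≤ b) {f : ℝ → ℝ → E}
    (hf : Integrable (Function.uncurry f)
      ((volume.restrict (Ioc a b)).prod (volume.restrict (Ioc a b)))) :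
    ∫ s in a..b, ∫ t in s..b, f s t = ∫ t in a..b, ∫ s in a..t, f s t := by
  set F : ℝ → ℝ → E := fun s t => {p : ℝ × ℝ | p.1 < p.2}.indicator (Function.uncurry f) (s, t)
  have hF : Integrable (Function.uncurry F)
      ((volume.restrict (Ioc a b)).prod (volume.restrict (Ioc a b))) :=
    hf.indicator (measurableSet_lt measurable_fst measurable_snd)
  have h_fst : ∀ s ∈ Ioc a b, ∫ t in s..b, f s t = ∫ t in Ioc a b, F s t := by
    intro s hs
    have : F s = (Ioi s).indicator (f s) := by ext t; by_cases h : s < t <;> simp [F, h]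
    rw [this, setIntegral_indicator measurableSet_Ioi, Ioc_inter_Ioi, max_eq_right hs.1.le,
      intervalIntegral.integral_of_le hs.2]
  have h_snd : ∀ t ∈ Ioc a b, ∫ s in a..t, f s t = ∫ s in Ioc a b, F s t := by
    intro t ht
    have : (fun s => F s t) = (Iio t).indicator (fun s => f s t) := by
      ext s; by_cases h : s < t <;> simp [F, h]
    have h_inter : Ioc a b ∩ Iio t = Ioo a t := by
      ext s
      simp only [mem_inter_iff, mem_Ioc, mem_Iio, mem_Ioo]
      constructor
      · exact fun h => ⟨h.1.1, h.2⟩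
      · exact fun h => ⟨⟨h.1, h.2.le.trans ht.2⟩, h.2⟩
    rw [this, setIntegral_indicator measurableSet_Iio, h_inter,
      intervalIntegral.integral_of_le ht.1.le, integral_Ioc_eq_integral_Ioo]
  rw [intervalIntegral.integral_of_le hab, intervalIntegral.integral_of_le hab,
    setIntegral_congr_fun measurableSet_Ioc h_fst, setIntegral_congr_fun measurableSet_Ioc h_snd]
  exact integral_integral_swap hF

/-- `x ∈ W^{1,1}(a,b; E)` with derivative `x'`. -/
def IsPrimitiveOn {E : Type*} [NormedAddCommGroup E] [NormedSpace ℝ E] (x x' : ℝ → E)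
    (a b : ℝ) : Prop :=
  IntervalIntegrable x' volume a b ∧ ∀ t ∈ Icc a b, x t = x a + ∫ s in a..t, x' s

namespace IsPrimitiveOn

variable {E F : Type*} [NormedAddCommGroup E] [NormedSpace ℝ E] [NormedAddCommGroup F]
  [NormedSpace ℝ F] {x x' : ℝ → E} {a b c d : ℝ}

theorem intervalIntegrable_of_mem (h : IsPrimitiveOn x x' a b) (hc : c ∈ Icc a b)
    (hd : d ∈ Icc a b) : IntervalIntegrable x' volume c d :=
  h.1.mono_set (uIcc_subset_uIcc (Icc_subset_uIcc hc) (Icc_subset_uIcc hd))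

theorem integral_eq_sub (h : IsPrimitiveOn x x' a b) (hc : c ∈ Icc a b) (hd : d ∈ Icc a b) :
    ∫ t in c..d, x' t = x d - x c := by
  have ha : a ∈ Icc a b := left_mem_Icc.2 (hc.1.trans hc.2)
  rw [← intervalIntegral.integral_interval_sub_left (h.intervalIntegrable_of_mem ha hd)
    (h.intervalIntegrable_of_mem ha hc), h.2 d hd, h.2 c hc]
  abel

theorem mono (h : IsPrimitiveOn x x' a b) (hc : c ∈ Icc a b) (hd : d ∈ Icc a b) :
    IsPrimitiveOn x x' c d :=
  ⟨h.intervalIntegrable_of_mem hc hd, fun t ht => by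
    rw [h.integral_eq_sub hc ⟨hc.1.trans ht.1, ht.2.trans hd.2⟩, add_sub_cancel]⟩

theorem continuousOn (h : IsPrimitiveOn x x' a b) : ContinuousOn x (Icc a b) := by
  have := intervalIntegral.continuousOn_primitive_interval' h.1 left_mem_uIcc
  exact ((continuousOn_const.add this).mono Icc_subset_uIcc).congr h.2

theorem integral_clm_apply [CompleteSpace E] [CompleteSpace F] (h : IsPrimitiveOn x x' a b)
    (L : E →L[ℝ] F) (hc : c ∈ Icc a b) (hd : d ∈ Icc a b) :
    ∫ t in c..d, L (x' t) = L (x d) - L (x c) := by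
  rw [L.intervalIntegral_comp_comm (h.intervalIntegrable_of_mem hc hd), h.integral_eq_sub hc hd,
    map_sub]

theorem aestronglyMeasurable (h : IsPrimitiveOn x x' a b) :
    AEStronglyMeasurable x (volume.restrict (Ioc a b)) :=
  (h.continuousOn.mono Ioc_subset_Icc_self).aestronglyMeasurable measurableSet_Ioc

end IsPrimitiveOn

section ProductRule

variable {E G : Type*} [NormedAddCommGroup E] [NormedSpace ℝ E] [NormedAddCommGroup G]
  [NormedSpace ℝ G]
  {Φ Φ' : ℝ → E →L[ℝ] G} {y y' : ℝ → E} {φ : ℝ → ℝ} {C a b : ℝ}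

theorem intervalIntegrable_weakDeriv_apply (hab : a ≤ b)
    (hΦ : ∀ w, IsPrimitiveOn (fun t => Φ t w) (fun t => Φ' t w) a b) (hy : IsPrimitiveOn y y' a b)
    (hΦ'φ : ∀ t ∈ Icc a b, ‖Φ' t‖ ≤ φ t) (hφ : IntervalIntegrable φ volume a b) :
    IntervalIntegrable (fun t => Φ' t (y t)) volume a b := by
  obtain ⟨M, hM⟩ := isCompact_Icc.exists_bound_of_continuousOn hy.continuousOn
  refine .clm_apply_of_norm_le hab (fun w => (hΦ w).1.1.aestronglyMeasurable)
    hy.aestronglyMeasurable (hφ.mul_const M) fun t ht => ?_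
  have ht' := Ioc_subset_Icc_self ht
  exact mul_le_mul (hΦ'φ t ht') (hM t ht') (norm_nonneg _) ((norm_nonneg _).trans (hΦ'φ t ht'))

theorem intervalIntegrable_apply_deriv (hab : a ≤ b)
    (hΦ : ∀ w, IsPrimitiveOn (fun t => Φ t w) (fun t => Φ' t w) a b) (hy : IsPrimitiveOn y y' a b)
    (hΦC : ∀ t ∈ Icc a b, ‖Φ t‖ ≤ C) :
    IntervalIntegrable (fun t => Φ t (y' t)) volume a b :=
  .clm_apply_of_norm_le hab (fun w => (hΦ w).aestronglyMeasurable) hy.1.1.aestronglyMeasurable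
    (hy.1.norm.const_mul C) fun t ht =>
      mul_le_mul_of_nonneg_right (hΦC t (Ioc_subset_Icc_self ht)) (norm_nonneg _)

theorem integrable_weakDeriv_apply_deriv_prod
    (hΦ : ∀ w, IsPrimitiveOn (fun t => Φ t w) (fun t => Φ' t w) a b) (hy : IsPrimitiveOn y y' a b)
    (hΦ'φ : ∀ t ∈ Icc a b, ‖Φ' t‖ ≤ φ t) (hφ : IntervalIntegrable φ volume a b) :
    Integrable (fun p : ℝ × ℝ => Φ' p.1 (y' p.2))
      ((volume.restrict (Ioc a b)).prod (volume.restrict (Ioc a b))) := by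
  refine Integrable.clm_apply_of_norm_le (fun w => (hΦ w).1.1.aestronglyMeasurable.comp_fst)
    hy.1.1.aestronglyMeasurable.comp_snd (hφ.1.mul_prod hy.1.1.norm) ?_
  filter_upwards [Measure.quasiMeasurePreserving_fst.ae (ae_restrict_mem measurableSet_Ioc)]
    with p hp
  exact mul_le_mul_of_nonneg_right (hΦ'φ p.1 (Ioc_subset_Icc_self hp)) (norm_nonneg _)

theorem clm_apply_sub_eq_integral [CompleteSpace E] [CompleteSpace G] (hab : a ≤ b)
    (hΦ : ∀ w, IsPrimitiveOn (fun t => Φ t w) (fun t => Φ' t w) a b) (hy : IsPrimitiveOn y y' a b)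
    (hΦC : ∀ t ∈ Icc a b, ‖Φ t‖ ≤ C) (hΦ'φ : ∀ t ∈ Icc a b, ‖Φ' t‖ ≤ φ t)
    (hφ : IntervalIntegrable φ volume a b) :
    Φ b (y b) - Φ a (y a) = ∫ t in a..b, (Φ' t (y t) + Φ t (y' t)) := by
  have ha : a ∈ Icc a b := left_mem_Icc.2 hab
  have hb : b ∈ Icc a b := right_mem_Icc.2 hab
  have hmem {t : ℝ} (ht : t ∈ uIcc a b) : t ∈ Icc a b := by rwa [uIcc_of_le hab] at ht
  have hΦ'y := intervalIntegrable_weakDeriv_apply hab hΦ hy hΦ'φ hφ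
  have hΦy' := intervalIntegrable_apply_deriv hab hΦ hy hΦC
  have hΦay' : IntervalIntegrable (fun t => Φ a (y' t)) volume a b :=
    ⟨(Φ a).integrable_comp hy.1.1, (Φ a).integrable_comp hy.1.2⟩
  have h_swap : ∫ s in a..b, (Φ' s (y b) - Φ' s (y s)) = ∫ t in a..b, (Φ t (y' t) - Φ a (y' t)) :=
    calc ∫ s in a..b, (Φ' s (y b) - Φ' s (y s))
        = ∫ s in a..b, ∫ t in s..b, Φ' s (y' t) := intervalIntegral.integral_congr fun s hs =>
          (hy.integral_clm_apply (Φ' s) (hmem hs) hb).symm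
      _ = ∫ t in a..b, ∫ s in a..t, Φ' s (y' t) :=
          integral_integral_triangle_swap hab (integrable_weakDeriv_apply_deriv_prod hΦ hy hΦ'φ hφ)
      _ = ∫ t in a..b, (Φ t (y' t) - Φ a (y' t)) := intervalIntegral.integral_congr fun t ht =>
          (hΦ (y' t)).integral_eq_sub ha (hmem ht)
  calc Φ b (y b) - Φ a (y a)
      = (∫ s in a..b, Φ' s (y b)) + ∫ t in a..b, Φ a (y' t) := by
        rw [(hΦ (y b)).integral_eq_sub ha hb, hy.integral_clm_apply (Φ a) ha hb]
        abel
    _ = (∫ s in a..b, Φ' s (y s)) + (∫ s in a..b, (Φ' s (y b) - Φ' s (y s)))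
          + ∫ t in a..b, Φ a (y' t) := by
        rw [intervalIntegral.integral_sub (hΦ (y b)).1 hΦ'y]
        abel
    _ = ∫ t in a..b, (Φ' t (y t) + Φ t (y' t)) := by
        rw [h_swap, intervalIntegral.integral_sub hΦy' hΦay',
          intervalIntegral.integral_add hΦ'y hΦy']
        abel

theorem IsPrimitiveOn.clm_apply [CompleteSpace E] [CompleteSpace G] (hab : a ≤ b)
    (hΦ : ∀ w, IsPrimitiveOn (fun t => Φ t w) (fun t => Φ' t w) a b) (hy : IsPrimitiveOn y y' a b)
    (hΦC : ∀ t ∈ Icc a b, ‖Φ t‖ ≤ C) (hΦ'φ : ∀ t ∈ Icc a b, ‖Φ' t‖ ≤ φ t)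
    (hφ : IntervalIntegrable φ volume a b) :
    IsPrimitiveOn (fun t => Φ t (y t)) (fun t => Φ' t (y t) + Φ t (y' t)) a b := by
  refine ⟨(intervalIntegrable_weakDeriv_apply hab hΦ hy hΦ'φ hφ).add
    (intervalIntegrable_apply_deriv hab hΦ hy hΦC), fun t ht => ?_⟩
  have ha : a ∈ Icc a b := left_mem_Icc.2 hab
  have hsub : Icc a t ⊆ Icc a b := Icc_subset_Icc_right ht.2
  rw [← clm_apply_sub_eq_integral ht.1 (fun w => (hΦ w).mono ha ht) (hy.mono ha ht)
    (fun s hs => hΦC s (hsub hs)) (fun s hs => hΦ'φ s (hsub hs)) (hφ.mono_set ?_)]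
  · abel
  · exact uIcc_subset_uIcc_left (Icc_subset_uIcc ht)

end ProductRule

theorem IsPrimitiveOn.clm_apply₂ {E F G : Type*} [NormedAddCommGroup E] [NormedSpace ℝ E]
    [CompleteSpace E] [NormedAddCommGroup F] [NormedSpace ℝ F] [CompleteSpace F]
    [NormedAddCommGroup G] [NormedSpace ℝ G] [CompleteSpace G]
    {A A' : ℝ → E →L[ℝ] F →L[ℝ] G} {x x' : ℝ → E} {y y' : ℝ → F} {C C' a b : ℝ} (hab : a ≤ b)
    (hA : ∀ v w, IsPrimitiveOn (fun t => A t v w) (fun t => A' t v w) a b)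
    (hx : IsPrimitiveOn x x' a b) (hy : IsPrimitiveOn y y' a b)
    (hAC : ∀ t ∈ Icc a b, ‖A t‖ ≤ C) (hA'C : ∀ t ∈ Icc a b, ‖A' t‖ ≤ C') :
    IsPrimitiveOn (fun t => A t (x t) (y t))
      (fun t => A' t (x t) (y t) + A t (x' t) (y t) + A t (x t) (y' t)) a b := by
  obtain ⟨M, hM⟩ := isCompact_Icc.exists_bound_of_continuousOn hx.continuousOn
  have hAx (w : F) : IsPrimitiveOn (fun t => A t (x t) w)
      (fun t => (A' t (x t) + A t (x' t)) w) a b :=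
    hx.clm_apply (Φ := fun t => (A t).flip w) (Φ' := fun t => (A' t).flip w) hab
      (fun v => hA v w)
      (fun t ht => (A t).flip.le_of_opNorm_le ((A t).opNorm_flip.trans_le (hAC t ht)) w)
      (fun t ht => (A' t).flip.le_of_opNorm_le ((A' t).opNorm_flip.trans_le (hA'C t ht)) w)
      intervalIntegrable_const
  have hAx_bound (t : ℝ) (ht : t ∈ Icc a b) : ‖A t (x t)‖ ≤ C * M :=
    ((A t).le_of_opNorm_le (hAC t ht) (x t)).trans
      (mul_le_mul_of_nonneg_left (hM t ht) ((norm_nonneg (A t)).trans (hAC t ht)))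
  have hA'x_bound (t : ℝ) (ht : t ∈ Icc a b) : ‖A' t (x t) + A t (x' t)‖ ≤ C' * M + C * ‖x' t‖ :=
    (norm_add_le _ _).trans (add_le_add
      (((A' t).le_of_opNorm_le (hA'C t ht) (x t)).trans
        (mul_le_mul_of_nonneg_left (hM t ht) ((norm_nonneg (A' t)).trans (hA'C t ht))))
      ((A t).le_of_opNorm_le (hAC t ht) (x' t)))
  simpa only [add_apply] using
    hy.clm_apply hab hAx hAx_bound hA'x_bound (intervalIntegrable_const.add (hx.1.norm.const_mul C))

theorem abs_continuity_of_Auu_general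
    (V : Type*) [NormedAddCommGroup V] [NormedSpace ℝ V] [CompleteSpace V]
    (T : ℝ)
    (A A' : ℝ → V →L[ℝ] V →L[ℝ] ℝ)
    (CA CA' : ℝ)
    (hAbdd : ∀ t ∈ Set.Icc (0 : ℝ) T, ‖A t‖ ≤ CA)
    (hA'bdd : ∀ t ∈ Set.Icc (0 : ℝ) T, ‖A' t‖ ≤ CA')
    (hA'int : ∀ v₁ v₂ : V, IntervalIntegrable (fun t => A' t v₁ v₂) volume 0 T)
    (hAac : ∀ v₁ v₂ : V, ∀ t ∈ Set.Icc (0 : ℝ) T,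
      A t v₁ v₂ = A 0 v₁ v₂ + ∫ s in (0 : ℝ)..t, A' s v₁ v₂)
    (hAsymm : ∀ t ∈ Set.Icc (0 : ℝ) T, ∀ v₁ v₂ : V, A t v₁ v₂ = A t v₂ v₁)
    (u u' : ℝ → V)
    (hu'L1 : IntervalIntegrable u' volume 0 T)
    (huac : ∀ t ∈ Set.Icc (0 : ℝ) T, u t = u 0 + ∫ s in (0 : ℝ)..t, u' s) :
    ∀ t₀ t₁ : ℝ, 0 ≤ t₀ → t₀ < t₁ → t₁ ≤ T →
      A t₁ (u t₁) (u t₁) - A t₀ (u t₀) (u t₀)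
        = ∫ t in t₀..t₁, (A' t (u t) (u t) + 2 * A t (u t) (u' t)) := by
  intro t₀ t₁ ht₀ hlt ht₁
  have h₀ : t₀ ∈ Icc 0 T := ⟨ht₀, hlt.le.trans ht₁⟩
  have h₁ : t₁ ∈ Icc 0 T := ⟨ht₀.trans hlt.le, ht₁⟩
  have hsub : Icc t₀ t₁ ⊆ Icc 0 T := Icc_subset_Icc ht₀ ht₁
  have hu : IsPrimitiveOn u u' t₀ t₁ := IsPrimitiveOn.mono ⟨hu'L1, huac⟩ h₀ h₁
  have hg := IsPrimitiveOn.clm_apply₂ hlt.le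
    (fun v w => IsPrimitiveOn.mono ⟨hA'int v w, hAac v w⟩ h₀ h₁) hu hu
    (fun t ht => hAbdd t (hsub ht)) (fun t ht => hA'bdd t (hsub ht))
  rw [← hg.integral_eq_sub (left_mem_Icc.2 hlt.le) (right_mem_Icc.2 hlt.le)]
  refine intervalIntegral.integral_congr fun t ht => ?_
  rw [uIcc_of_le hlt.le] at ht
  simp only [hAsymm t (hsub ht) (u' t) (u t)]
  ring

/-- **Absolute continuity of `t ↦ ⟨A(t)u(t), u(t)⟩`** (Lemma `lem:abscontofAuu`).
Let `V` be a real reflexive Banach space (reflexivity is expressed by surjectivity of the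
canonical embedding into the double dual), `T > 0`, and let `A, A' : [0,T] → L(V;V')` be
bounded, such that for all `v₁, v₂ ∈ V` the function `t ↦ ⟨A(t)v₁,v₂⟩` is absolutely
continuous with derivative `⟨A'(t)v₁,v₂⟩` (expressed via the fundamental theorem of
calculus with integrable integrand). Assume each `A(t)` is symmetric, and let
`u ∈ W^{1,1}(0,T;V)` with derivative `u'`. Then `g(t) = ⟨A(t)u(t),u(t)⟩` is absolutely
continuous with derivative `⟨A'u,u⟩ + 2⟨Au,u'⟩`, i.e. for all `0 ≤ t₀ < t₁ ≤ T`: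
`⟨A(t₁)u(t₁),u(t₁)⟩ − ⟨A(t₀)u(t₀),u(t₀)⟩ = ∫_{t₀}^{t₁} ⟨A'u,u⟩ + 2⟨Au,u'⟩ dt`. -/
theorem abs_continuity_of_Auu
    (V : Type*) [NormedAddCommGroup V] [NormedSpace ℝ V] [CompleteSpace V]
    (hreflexive : Function.Surjective (NormedSpace.inclusionInDoubleDual ℝ V))
    (T : ℝ) (hT : 0 < T)
    (A A' : ℝ → V →L[ℝ] V →L[ℝ] ℝ)
    (CA CA' : ℝ)
    (hAbdd : ∀ t ∈ Set.Icc (0 : ℝ) T, ‖A t‖ ≤ CA)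
    (hA'bdd : ∀ t ∈ Set.Icc (0 : ℝ) T, ‖A' t‖ ≤ CA')
    (hA'int : ∀ v₁ v₂ : V, IntervalIntegrable (fun t => A' t v₁ v₂) volume 0 T)
    (hAac : ∀ v₁ v₂ : V, ∀ t ∈ Set.Icc (0 : ℝ) T,
      A t v₁ v₂ = A 0 v₁ v₂ + ∫ s in (0 : ℝ)..t, A' s v₁ v₂)
    (hAsymm : ∀ t ∈ Set.Icc (0 : ℝ) T, ∀ v₁ v₂ : V, A t v₁ v₂ = A t v₂ v₁)
    (u u' : ℝ → V)
    (hu'L1 : IntervalIntegrable u' volume 0 T)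
    (huac : ∀ t ∈ Set.Icc (0 : ℝ) T, u t = u 0 + ∫ s in (0 : ℝ)..t, u' s) :
    ∀ t₀ t₁ : ℝ, 0 ≤ t₀ → t₀ < t₁ → t₁ ≤ T →
      A t₁ (u t₁) (u t₁) - A t₀ (u t₀) (u t₀)
        = ∫ t in t₀..t₁, (A' t (u t) (u t) + 2 * A t (u t) (u' t)) :=
  abs_continuity_of_Auu_general V T A A' CA CA' hAbdd hA'bdd hA'int hAac hAsymm u u' hu'L1 huac
end

section
/- Faà di Bruno difference estimate: For all n, d, k, l ∈ ℕ there is a constant C = C(n,d,k,l) > 0 such that the following holds. Let Ω ⊂ ℝ^d be open, g, h ∈ C^n(Ω; ℝ^k), and f ∈ C^n(ℝ^k; ℝ^l) such that f and all its derivatives up to order n are uniformly continuous; denote by ω_{D^s f} a modulus of continuity of D^s f. Then for every x ∈ Ω: |D^n(f∘(g+h))(x) − D^n(f∘g)(x)| ≤ C Σ_{s=1}^n Σ_{l₁,…,l_s ≥ 1, l₁+⋯+l_s = n} ω_{D^s f}(|h(x)|) Π_{j=1}^s |D^{l_j} g(x)| + C Σ_{s=1}^n Σ_{l₁,…,l_s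 ≥ 1, l₁+⋯+l_s = n} Σ_{m=1}^s |D^s f(g(x)+h(x))| Π_{j=1}^m |D^{l_j} h(x)| Π_{j=m+1}^s |D^{l_j} g(x)|. -/
/-!
By the Faà di Bruno formula, `Dⁿ(f ∘ u)(x)` is a sum over ordered partitions `c` of `{0, …, n-1}`
of `D^{|c|} f (u x)` applied to the blocks `D^{|I|} u x`, `I ∈ c`. For `u = g + h`, expand each
term multilinearly in `D^{|I|} g x + D^{|I|} h x`. The choice of `g` on every block differs from
the corresponding term for `f ∘ g` only through `D^{|c|} f (g x + h x) - D^{|c|} f (g x)`, which is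
bounded by `ω_{|c|}(|h x|)`. Every other choice puts `h` on a nonempty set `S` of blocks; listing
the blocks of `S` first turns it into a term of the second sum. Counting partitions and subsets
gives `C = #{ordered partitions of n} · 2ⁿ`.
-/

open Finset

theorem Fin.exists_perm_mem_iff_lt_card {N : ℕ} (S : Finset (Fin N)) :
    ∃ σ : Equiv.Perm (Fin N), ∀ j, σ j ∈ S ↔ (j : ℕ) < #S := by
  have hcard : #S + #Sᶜ = N := by simp
  refine ⟨(finCongr hcard.symm).trans (finSumFinEquiv.symm.trans (finSumEquivOfFinset rfl rfl)),
    fun j ↦ ?_⟩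
  obtain ⟨j, rfl⟩ := (finCongr hcard).surjective j
  induction j using Fin.addCases with
  | left i => simp
  | right i => simpa using Finset.mem_compl.1 (Sᶜ.orderEmbOfFin_mem rfl i)

theorem Composition.exists_length_eq_blocksFun_eq {n N : ℕ} (b : Fin N → ℕ)
    (hb : ∀ i, 0 < b i) (hsum : ∑ i, b i = n) :
    ∃ c : Composition n, ∃ h : c.length = N, ∀ j, c.blocksFun j = b (Fin.cast h j) :=
  ⟨⟨List.ofFn b, by simpa [List.mem_ofFn] using hb, by rw [List.sum_ofFn, hsum]⟩,
    List.length_ofFn, fun j ↦ List.get_ofFn b j⟩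

theorem Composition.exists_prod_ite_lt_card_eq_prod_ite_mem {M : Type*} [CommMonoid M]
    {n N : ℕ} (b : Fin N → ℕ) (hb : ∀ i, 0 < b i) (hsum : ∑ i, b i = n)
    (S : Finset (Fin N)) (A B : ℕ → M) :
    ∃ c : Composition n, c.length = N ∧
      ∏ j : Fin c.length, (if (j : ℕ) < #S then A (c.blocksFun j) else B (c.blocksFun j)) =
        ∏ i, if i ∈ S then A (b i) else B (b i) := by
  obtain ⟨σ, hσ⟩ := Fin.exists_perm_mem_iff_lt_card S
  obtain ⟨c, hlen, hc⟩ := exists_length_eq_blocksFun_eq (b ∘ σ) (fun i ↦ hb (σ i))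
    ((Equiv.sum_comp σ b).trans hsum)
  refine ⟨c, hlen, ?_⟩
  rw [← Equiv.prod_comp σ, ← Fintype.prod_equiv (finCongr hlen)
    (fun j ↦ if (j : ℕ) < #S then A (c.blocksFun j) else B (c.blocksFun j)) _ (fun j ↦ ?_)]
  simp [hc, hσ]

namespace OrderedFinpartition

variable {n : ℕ} (c : OrderedFinpartition n)

theorem sum_partSize : ∑ i, c.partSize i = n := by
  simpa using Fintype.card_congr c.equivSigma

section

variable {W A B : ℕ → ℝ} (hW : ∀ k ≤ n, 0 ≤ W k) (hA : ∀ k, 0 ≤ A k) (hB : ∀ k, 0 ≤ B k)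
include hW hB

theorem mul_prod_le_sum_composition :
    W c.length * ∏ i, B (c.partSize i) ≤
      ∑ c' : Composition n, W c'.length * ∏ j, B (c'.blocksFun j) := by
  obtain ⟨c', hlen, hprod⟩ := Composition.exists_prod_ite_lt_card_eq_prod_ite_mem
    c.partSize c.partSize_pos c.sum_partSize ∅ B B
  simp only [card_empty, not_lt_zero, if_false, notMem_empty] at hprod
  rw [← hprod, ← hlen]
  exact single_le_sum (f := fun c' : Composition n ↦ W c'.length * ∏ j, B (c'.blocksFun j))
    (fun c' _ ↦ mul_nonneg (hW _ c'.length_le) (prod_nonneg fun j _ ↦ hB _)) (mem_univ c')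

include hA in
theorem mul_prod_ite_le_sum_composition {S : Finset (Fin c.length)} (hS : S.Nonempty) :
    W c.length * ∏ i, (if i ∈ S then A (c.partSize i) else B (c.partSize i)) ≤
      ∑ c' : Composition n, ∑ m ∈ Icc 1 c'.length,
        W c'.length * ∏ j : Fin c'.length,
          (if (j : ℕ) < m then A (c'.blocksFun j) else B (c'.blocksFun j)) := by
  obtain ⟨c', hlen, hprod⟩ := Composition.exists_prod_ite_lt_card_eq_prod_ite_mem
    c.partSize c.partSize_pos c.sum_partSize S A B
  have hterm : ∀ (c' : Composition n) m, 0 ≤ W c'.length * ∏ j : Fin c'.length,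
      (if (j : ℕ) < m then A (c'.blocksFun j) else B (c'.blocksFun j)) := fun c' m ↦
    mul_nonneg (hW _ c'.length_le) (prod_nonneg fun j _ ↦ by split_ifs <;> simp [hA, hB])
  have hm : #S ∈ Icc 1 c'.length := mem_Icc.2 ⟨hS.card_pos, by simpa [hlen] using card_le_univ S⟩
  have hWlen : W c.length = W c'.length := by rw [hlen]
  rw [← hprod, hWlen]
  exact (single_le_sum (fun m _ ↦ hterm c' m) hm).trans
    (single_le_sum (f := fun c' : Composition n ↦ ∑ m ∈ Icc 1 c'.length, _)
      (fun c' _ ↦ sum_nonneg fun m _ ↦ hterm c' m) (mem_univ c'))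

include hA in
theorem sum_mul_prod_ite_le_sum_composition :
    ∑ S ∈ univ.erase (∅ : Finset (Fin c.length)),
        W c.length * ∏ i, (if i ∈ S then A (c.partSize i) else B (c.partSize i)) ≤
      2 ^ n * ∑ c' : Composition n, ∑ m ∈ Icc 1 c'.length,
        W c'.length * ∏ j : Fin c'.length,
          (if (j : ℕ) < m then A (c'.blocksFun j) else B (c'.blocksFun j)) := by
  have hcard : (#(univ.erase (∅ : Finset (Fin c.length))) : ℝ) ≤ 2 ^ n :=
    calc (#(univ.erase (∅ : Finset (Fin c.length))) : ℝ)
        ≤ #(univ : Finset (Finset (Fin c.length))) := mod_cast card_erase_le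
      _ = 2 ^ c.length := by simp
      _ ≤ 2 ^ n := pow_le_pow_right₀ one_le_two c.length_le
  refine (sum_le_sum fun S hS ↦ c.mul_prod_ite_le_sum_composition hW hA hB
    (nonempty_iff_ne_empty.2 (ne_of_mem_erase hS))).trans ?_
  rw [sum_const, nsmul_eq_mul]
  gcongr
  exact sum_nonneg fun c' _ ↦ sum_nonneg fun m _ ↦ mul_nonneg (hW _ c'.length_le)
    (prod_nonneg fun j _ ↦ by split_ifs <;> simp [hA, hB])

end

variable {𝕜 E F G : Type*} [NontriviallyNormedField 𝕜]
  [NormedAddCommGroup E] [NormedSpace 𝕜 E] [NormedAddCommGroup F] [NormedSpace 𝕜 F]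
  [NormedAddCommGroup G] [NormedSpace 𝕜 G]

theorem compAlongOrderedFinpartition_add_sub (f₁ f₂ : F [×c.length]→L[𝕜] G)
    (p q : ∀ i, E [×c.partSize i]→L[𝕜] F) :
    c.compAlongOrderedFinpartition f₁ (p + q) - c.compAlongOrderedFinpartition f₂ q =
      c.compAlongOrderedFinpartition (f₁ - f₂) q +
        ∑ S ∈ univ.erase (∅ : Finset (Fin c.length)),
          c.compAlongOrderedFinpartition f₁ (S.piecewise p q) := by
  have hexpand : c.compAlongOrderedFinpartition f₁ (p + q) =
      ∑ S : Finset (Fin c.length), c.compAlongOrderedFinpartition f₁ (S.piecewise p q) :=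
    (c.compAlongOrderedFinpartitionL 𝕜 E F G f₁).map_add_univ p q
  have hsub : c.compAlongOrderedFinpartition (f₁ - f₂) q =
      c.compAlongOrderedFinpartition f₁ q - c.compAlongOrderedFinpartition f₂ q := by
    simp only [← compAlongOrderedFinpartitionL_apply, map_sub, sub_apply]
  rw [hexpand, ← add_sum_erase _ _ (mem_univ ∅), hsub, piecewise_empty]
  abel

theorem norm_compAlongOrderedFinpartition_add_sub_le (f₁ f₂ : F [×c.length]→L[𝕜] G)
    (p q : ∀ i, E [×c.partSize i]→L[𝕜] F) :
    ‖c.compAlongOrderedFinpartition f₁ (p + q) - c.compAlongOrderedFinpartition f₂ q‖ ≤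
      ‖f₁ - f₂‖ * ∏ i, ‖q i‖ +
        ∑ S ∈ univ.erase (∅ : Finset (Fin c.length)),
          ‖f₁‖ * ∏ i, (if i ∈ S then ‖p i‖ else ‖q i‖) := by
  rw [compAlongOrderedFinpartition_add_sub]
  refine (norm_add_le _ _).trans (add_le_add (c.norm_compAlongOrderedFinpartition_le _ _)
    ((norm_sum_le _ _).trans (sum_le_sum fun S _ ↦ ?_)))
  refine (c.norm_compAlongOrderedFinpartition_le _ _).trans_eq ?_
  simp only [piecewise, apply_ite]

end OrderedFinpartition

section

variable {𝕜 E F G : Type*} [NontriviallyNormedField 𝕜]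
  [NormedAddCommGroup E] [NormedSpace 𝕜 E] [NormedAddCommGroup F] [NormedSpace 𝕜 F]
  [NormedAddCommGroup G] [NormedSpace 𝕜 G] {n : ℕ} {s : Set E} {x : E}

theorem iteratedFDerivWithin_comp_eq_sum {f : F → G} {g : E → F}
    (hf : ContDiffAt 𝕜 n f (g x)) (hg : ContDiffWithinAt 𝕜 n g s x) (hs : UniqueDiffOn 𝕜 s)
    (hx : x ∈ s) :
    iteratedFDerivWithin 𝕜 n (f ∘ g) s x = ∑ c : OrderedFinpartition n,
      c.compAlongOrderedFinpartition (iteratedFDeriv 𝕜 c.length f (g x))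
        (fun i ↦ iteratedFDerivWithin 𝕜 (c.partSize i) g s x) := by
  rw [iteratedFDerivWithin_comp hf.contDiffWithinAt hg uniqueDiffOn_univ hs hx
    (Set.mapsTo_univ _ _) le_rfl]
  simp [FormalMultilinearSeries.taylorComp,
    FormalMultilinearSeries.compAlongOrderedFinpartition, ftaylorSeriesWithin,
    iteratedFDerivWithin_univ]

theorem norm_iteratedFDerivWithin_comp_add_sub_comp_le {f : F → G} {g h : E → F}
    (hf₁ : ContDiffAt 𝕜 n f (g x + h x)) (hf₂ : ContDiffAt 𝕜 n f (g x))
    (hg : ContDiffWithinAt 𝕜 n g s x) (hh : ContDiffWithinAt 𝕜 n h s x)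
    (hs : UniqueDiffOn 𝕜 s) (hx : x ∈ s) :
    ‖iteratedFDerivWithin 𝕜 n (f ∘ (g + h)) s x - iteratedFDerivWithin 𝕜 n (f ∘ g) s x‖ ≤
      ∑ c : OrderedFinpartition n,
        (‖iteratedFDeriv 𝕜 c.length f (g x + h x) - iteratedFDeriv 𝕜 c.length f (g x)‖ *
            ∏ i, ‖iteratedFDerivWithin 𝕜 (c.partSize i) g s x‖ +
          ∑ S ∈ univ.erase (∅ : Finset (Fin c.length)),
            ‖iteratedFDeriv 𝕜 c.length f (g x + h x)‖ *
              ∏ i, (if i ∈ S then ‖iteratedFDerivWithin 𝕜 (c.partSize i) h s x‖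
                else ‖iteratedFDerivWithin 𝕜 (c.partSize i) g s x‖)) := by
  have hadd (c : OrderedFinpartition n) :
      (fun i ↦ iteratedFDerivWithin 𝕜 (c.partSize i) (g + h) s x) =
        (fun i ↦ iteratedFDerivWithin 𝕜 (c.partSize i) h s x) +
          fun i ↦ iteratedFDerivWithin 𝕜 (c.partSize i) g s x := by
    funext i
    have hi : (c.partSize i : WithTop ℕ∞) ≤ n := by exact_mod_cast c.partSize_le i
    rw [iteratedFDerivWithin_add_apply (hg.of_le hi) (hh.of_le hi) hs hx, add_comm]
    rfl
  rw [iteratedFDerivWithin_comp_eq_sum (g := g + h) hf₁ (hg.add hh) hs hx,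
    iteratedFDerivWithin_comp_eq_sum hf₂ hg hs hx, ← sum_sub_distrib]
  refine (norm_sum_le _ _).trans (sum_le_sum fun c _ ↦ ?_)
  rw [Pi.add_apply, hadd c]
  exact c.norm_compAlongOrderedFinpartition_add_sub_le _ _ _ _

end

theorem faa_di_bruno_difference_estimate_general
    (n d k l : ℕ) :
    ∃ C > (0 : ℝ), ∀ (Ω : Set (EuclideanSpace ℝ (Fin d))), IsOpen Ω →
      ∀ (g h : EuclideanSpace ℝ (Fin d) → EuclideanSpace ℝ (Fin k))
        (f : EuclideanSpace ℝ (Fin k) → EuclideanSpace ℝ (Fin l))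
        (ω : ℕ → ℝ → ℝ),
        ContDiffOn ℝ n g Ω → ContDiffOn ℝ n h Ω → ContDiff ℝ n f →
        (∀ s, Monotone (ω s)) →
        (∀ s, Filter.Tendsto (ω s) (nhdsWithin 0 (Set.Ioi 0)) (nhds 0)) →
        (∀ s ≤ n, ∀ a b : EuclideanSpace ℝ (Fin k),
          ‖iteratedFDeriv ℝ s f a - iteratedFDeriv ℝ s f b‖ ≤ ω s ‖a - b‖) →
        ∀ x ∈ Ω,
          ‖iteratedFDerivWithin ℝ n (f ∘ (g + h)) Ω x -
              iteratedFDerivWithin ℝ n (f ∘ g) Ω x‖ ≤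
            C * (∑ c : Composition n, ω c.length ‖h x‖ *
                  ∏ j : Fin c.length, ‖iteratedFDerivWithin ℝ (c.blocksFun j) g Ω x‖) +
            C * (∑ c : Composition n, ∑ m ∈ Finset.Icc 1 c.length,
                  ‖iteratedFDeriv ℝ c.length f (g x + h x)‖ *
                    ∏ j : Fin c.length,
                      (if (j : ℕ) < m then ‖iteratedFDerivWithin ℝ (c.blocksFun j) h Ω x‖
                        else ‖iteratedFDerivWithin ℝ (c.blocksFun j) g Ω x‖)) := by
  have hcard : 0 < Fintype.card (OrderedFinpartition n) := Fintype.card_pos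
  refine ⟨Fintype.card (OrderedFinpartition n) * 2 ^ n, by positivity, ?_⟩
  intro Ω hΩ g h f ω hg hh hf hmono _ hω x hx
  set R₁ := ∑ c : Composition n, ω c.length ‖h x‖ *
    ∏ j : Fin c.length, ‖iteratedFDerivWithin ℝ (c.blocksFun j) g Ω x‖
  set R₂ := ∑ c : Composition n, ∑ m ∈ Finset.Icc 1 c.length,
    ‖iteratedFDeriv ℝ c.length f (g x + h x)‖ * ∏ j : Fin c.length,
      (if (j : ℕ) < m then ‖iteratedFDerivWithin ℝ (c.blocksFun j) h Ω x‖
        else ‖iteratedFDerivWithin ℝ (c.blocksFun j) g Ω x‖)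
  have hω₀ (s : ℕ) (hs : s ≤ n) : 0 ≤ ω s ‖h x‖ :=
    (by simpa using hω s hs 0 0 : 0 ≤ ω s 0).trans (hmono s (norm_nonneg _))
  have hdiff (s : ℕ) (hs : s ≤ n) :
      ‖iteratedFDeriv ℝ s f (g x + h x) - iteratedFDeriv ℝ s f (g x)‖ ≤ ω s ‖h x‖ := by
    simpa using hω s hs (g x + h x) (g x)
  have hR₁ : 0 ≤ R₁ := sum_nonneg fun c _ ↦
    mul_nonneg (hω₀ _ c.length_le) (prod_nonneg fun _ _ ↦ norm_nonneg _)
  calc _ ≤ _ := norm_iteratedFDerivWithin_comp_add_sub_comp_le hf.contDiffAt hf.contDiffAt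
        (hg x hx) (hh x hx) hΩ.uniqueDiffOn hx
    _ ≤ ∑ _c : OrderedFinpartition n, (R₁ + 2 ^ n * R₂) := by
      refine sum_le_sum fun c _ ↦ add_le_add ?_ ?_
      · refine (mul_le_mul_of_nonneg_right (hdiff _ c.length_le)
          (prod_nonneg fun _ _ ↦ norm_nonneg _)).trans ?_
        exact c.mul_prod_le_sum_composition (W := fun s ↦ ω s ‖h x‖)
          (B := fun s ↦ ‖iteratedFDerivWithin ℝ s g Ω x‖) hω₀ (fun _ ↦ norm_nonneg _)
      · exact c.sum_mul_prod_ite_le_sum_composition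
          (W := fun s ↦ ‖iteratedFDeriv ℝ s f (g x + h x)‖)
          (A := fun s ↦ ‖iteratedFDerivWithin ℝ s h Ω x‖)
          (B := fun s ↦ ‖iteratedFDerivWithin ℝ s g Ω x‖) (fun _ _ ↦ norm_nonneg _)
          (fun _ ↦ norm_nonneg _) (fun _ ↦ norm_nonneg _)
    _ ≤ _ := by
      rw [sum_const, card_univ, nsmul_eq_mul, mul_assoc, mul_assoc, ← mul_add]
      gcongr
      exact le_mul_of_one_le_left hR₁ (one_le_pow₀ one_le_two)

/-- **Faà di Bruno difference estimate.** For all `n, d, k, l ∈ ℕ` there is a constant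
`C = C(n,d,k,l) > 0` such that for every open `Ω ⊂ ℝ^d`, all `g, h ∈ C^n(Ω; ℝ^k)` and every
`f ∈ C^n(ℝ^k; ℝ^l)` whose derivatives `D^s f` up to order `n` admit moduli of continuity
`ω s` (nondecreasing, `ω s → 0` at `0⁺`), one has for every `x ∈ Ω`:
`|D^n(f∘(g+h))(x) − D^n(f∘g)(x)|
  ≤ C Σ_{s,(l_j)} ω_{D^s f}(|h(x)|) Π_j |D^{l_j} g(x)|
  + C Σ_{s,(l_j)} Σ_{m=1}^s |D^s f(g(x)+h(x))| Π_{j≤m} |D^{l_j} h(x)| Π_{j>m} |D^{l_j} g(x)|`.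
Sums over `s` and ordered tuples `(l₁,…,l_s)` of positive integers with `l₁+⋯+l_s = n` are
encoded as sums over `c : Composition n` (with `s = c.length`, `l_j = c.blocksFun j`). -/
theorem faa_di_bruno_difference_estimate
    (n d k l : ℕ) (hn : 0 < n) (hd : 0 < d) (hk : 0 < k) (hl : 0 < l) :
    ∃ C > (0 : ℝ), ∀ (Ω : Set (EuclideanSpace ℝ (Fin d))), IsOpen Ω →
      ∀ (g h : EuclideanSpace ℝ (Fin d) → EuclideanSpace ℝ (Fin k))
        (f : EuclideanSpace ℝ (Fin k) → EuclideanSpace ℝ (Fin l))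
        (ω : ℕ → ℝ → ℝ),
        ContDiffOn ℝ n g Ω → ContDiffOn ℝ n h Ω → ContDiff ℝ n f →
        (∀ s, Monotone (ω s)) →
        (∀ s, Filter.Tendsto (ω s) (nhdsWithin 0 (Set.Ioi 0)) (nhds 0)) →
        (∀ s ≤ n, ∀ a b : EuclideanSpace ℝ (Fin k),
          ‖iteratedFDeriv ℝ s f a - iteratedFDeriv ℝ s f b‖ ≤ ω s ‖a - b‖) →
        ∀ x ∈ Ω,
          ‖iteratedFDerivWithin ℝ n (f ∘ (g + h)) Ω x -
              iteratedFDerivWithin ℝ n (f ∘ g) Ω x‖ ≤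
            C * (∑ c : Composition n, ω c.length ‖h x‖ *
                  ∏ j : Fin c.length, ‖iteratedFDerivWithin ℝ (c.blocksFun j) g Ω x‖) +
            C * (∑ c : Composition n, ∑ m ∈ Finset.Icc 1 c.length,
                  ‖iteratedFDeriv ℝ c.length f (g x + h x)‖ *
                    ∏ j : Fin c.length,
                      (if (j : ℕ) < m then ‖iteratedFDerivWithin ℝ (c.blocksFun j) h Ω x‖
                        else ‖iteratedFDerivWithin ℝ (c.blocksFun j) g Ω x‖)) :=
  faa_di_bruno_difference_estimate_general n d k l
end

section
/- Mollification approximation estimate: For any Rad > 0, k, d ∈ ℕ and p ≥ 1 there is a constant C = C(Rad, d, p) > 0 such that for every measurable U ⊂ ℝ^d, every ε > 0, and every y ∈ C^k(ℝ^d; ℝ^d) whose k-th derivative ∇^k y is p-integrable on U + B_{(Rad+1)ε}(0), one has ‖ x ↦ ‖∇^k (y ∗ η_ε)‖_{L^∞(B_{ε·Rad}(x))} ‖_{L^p(U)} ≤ C ‖∇^k y‖_{L^p(U + B_{(Rad+1)ε}(0))}, where η_ε is the standard scaled smoothing kernel. -/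
noncomputable section
open MeasureTheory
open scoped Pointwise ENNReal Convolution

variable {d : ℕ}
local notation "E" => EuclideanSpace ℝ (Fin d)

lemma conv_integrand_integrable {G : Type*} [NormedAddCommGroup G] [NormedSpace ℝ G]
    {f : E → ℝ} (hfc : Continuous f) (hcf : HasCompactSupport f)
    {F : E → G} (hF : Continuous F) (x : E) :
    Integrable (fun t => f t • F (x - t)) volume := by
  apply Continuous.integrable_of_hasCompactSupport
  · exact hfc.smul (hF.comp (continuous_const.sub continuous_id))
  · exact hcf.smul_right

lemma itFD_conv {G : Type*} [NormedAddCommGroup G] [NormedSpace ℝ G] [CompleteSpace G]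
    (k : ℕ) {f : E → ℝ} (hfc : Continuous f) (hcf : HasCompactSupport f)
    {g : E → G} (hg : ContDiff ℝ k g) (hcg : HasCompactSupport g) :
    iteratedFDeriv ℝ k (f ⋆[ContinuousLinearMap.lsmul ℝ ℝ, volume] g)
      = f ⋆[ContinuousLinearMap.lsmul ℝ ℝ, volume] iteratedFDeriv ℝ k g := by
  induction k with
  | zero =>
    funext x
    ext m
    have h0c : Continuous (iteratedFDeriv ℝ 0 g) := hg.continuous_iteratedFDeriv le_rfl
    rw [iteratedFDeriv_zero_apply, convolution_def, convolution_def]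
    simp only [ContinuousLinearMap.lsmul_apply]
    rw [ContinuousMultilinearMap.integral_apply (conv_integrand_integrable hfc hcf h0c x)]
    congr 1
  | succ n ih =>
    have hgn : ContDiff ℝ n g := hg.of_le (by exact_mod_cast n.le_succ)
    have ihe := ih hgn
    have hdg : ContDiff ℝ 1 (iteratedFDeriv ℝ n g) :=
      hg.iteratedFDeriv_right (by rw [add_comm]; exact_mod_cast le_rfl)
    have hcg' : HasCompactSupport (iteratedFDeriv ℝ n g) := hcg.iteratedFDeriv n
    have hloc : LocallyIntegrable f volume := hfc.locallyIntegrable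
    have hcfd : Continuous (fderiv ℝ (iteratedFDeriv ℝ n g)) := hdg.continuous_fderiv one_ne_zero
    have hcfd' : HasCompactSupport (fderiv ℝ (iteratedFDeriv ℝ n g)) := hcg'.fderiv ℝ
    funext x
    ext m
    rw [iteratedFDeriv_succ_apply_left, ihe,
      (hcg'.hasFDerivAt_convolution_right (ContinuousLinearMap.lsmul ℝ ℝ) hloc hdg x).fderiv,
      convolution_precompR_apply (ContinuousLinearMap.lsmul ℝ ℝ) hloc hcfd' hcfd x (m 0),
      convolution_def, convolution_def]
    simp only [ContinuousLinearMap.lsmul_apply]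
    rw [ContinuousMultilinearMap.integral_apply
        (conv_integrand_integrable hfc hcf (hcfd.clm_apply continuous_const) x),
      ContinuousMultilinearMap.integral_apply
        (conv_integrand_integrable hfc hcf (hg.continuous_iteratedFDeriv le_rfl) x)]
    congr 1

lemma itFD_congr_nhds {G : Type*} [NormedAddCommGroup G] [NormedSpace ℝ G]
    {g y : E → G} {x : E} (h : g =ᶠ[nhds x] y) (k : ℕ) :
    iteratedFDeriv ℝ k g x = iteratedFDeriv ℝ k y x := by
  rw [← iteratedFDerivWithin_univ, ← iteratedFDerivWithin_univ]
  exact Filter.EventuallyEq.iteratedFDerivWithin_eq (by rwa [nhdsWithin_univ]) h.eq_of_nhds k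

lemma itFD_conv_point {G : Type*} [NormedAddCommGroup G] [NormedSpace ℝ G] [CompleteSpace G]
    (k : ℕ) {f : E → ℝ} (hfc : Continuous f) (hcf : HasCompactSupport f)
    {y : E → G} (hy : ContDiff ℝ k y) (a : E) :
    iteratedFDeriv ℝ k (f ⋆[ContinuousLinearMap.lsmul ℝ ℝ, volume] y) a
      = (f ⋆[ContinuousLinearMap.lsmul ℝ ℝ, volume] iteratedFDeriv ℝ k y) a := by
  obtain ⟨rad, hrad⟩ := hcf.isBounded.subset_closedBall 0
  set R : ℝ := ‖a‖ + |rad| + 2 with hR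
  have hR0 : 0 < R := by positivity
  let χ : ContDiffBump (0 : E) := ⟨R + 1, R + 2, by positivity, by linarith⟩
  set g : E → G := fun z => χ z • y z with hgdef
  have hgc : ContDiff ℝ k g := χ.contDiff.smul hy
  have hgcs : HasCompactSupport g := χ.hasCompactSupport.smul_right
  have hsupp : ∀ t : E, f t ≠ 0 → ‖t‖ ≤ |rad| := by
    intro t ht
    have : t ∈ Metric.closedBall (0 : E) rad := hrad (subset_tsupport f ht)
    have := Metric.mem_closedBall.1 this
    rw [dist_zero_right] at this
    exact this.trans (le_abs_self rad)
  have hgy : ∀ w : E, ‖w‖ < R + 1 → iteratedFDeriv ℝ k g w = iteratedFDeriv ℝ k y w := by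
    intro w hw
    apply itFD_congr_nhds
    apply Filter.eventuallyEq_of_mem (Metric.isOpen_ball.mem_nhds (show w ∈ Metric.ball (0:E) (R+1) by
      simpa [Metric.mem_ball, dist_zero_right] using hw))
    intro z hz
    have hz' : z ∈ Metric.closedBall (0 : E) (R + 1) := Metric.ball_subset_closedBall hz
    simp only [hgdef]
    rw [χ.one_of_mem_closedBall hz', one_smul]
  have hev : (f ⋆[ContinuousLinearMap.lsmul ℝ ℝ, volume] y)
      =ᶠ[nhds a] (f ⋆[ContinuousLinearMap.lsmul ℝ ℝ, volume] g) := by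
    apply Filter.eventuallyEq_of_mem (Metric.ball_mem_nhds a one_pos)
    intro z hz
    rw [convolution_def, convolution_def]
    congr 1
    funext t
    by_cases ht : f t = 0
    · simp [ht]
    · have h1 : ‖z - t‖ ≤ R + 1 := by
        have hzn : ‖z‖ ≤ ‖a‖ + 1 := by
          have := (mem_ball_iff_norm.1 hz).le
          have h2 : ‖z‖ - ‖a‖ ≤ ‖z - a‖ := norm_sub_norm_le z a
          linarith
        calc ‖z - t‖ ≤ ‖z‖ + ‖t‖ := norm_sub_le z t
        _ ≤ (‖a‖ + 1) + |rad| := add_le_add hzn (hsupp t ht)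
        _ ≤ R + 1 := by rw [hR]; linarith
      have : χ (z - t) = 1 := χ.one_of_mem_closedBall (by
        simpa [Metric.mem_closedBall, dist_zero_right] using h1)
      simp only [ContinuousLinearMap.lsmul_apply, hgdef, this, one_smul]
  rw [itFD_congr_nhds hev k, itFD_conv k hfc hcf hgc hgcs, convolution_def, convolution_def]
  congr 1
  funext t
  by_cases ht : f t = 0
  · simp [ht]
  · have h1 : ‖a - t‖ < R + 1 := by
      calc ‖a - t‖ ≤ ‖a‖ + ‖t‖ := norm_sub_le a t
      _ ≤ ‖a‖ + |rad| := by linarith [hsupp t ht]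
      _ < R + 1 := by rw [hR]; linarith
    simp only [ContinuousLinearMap.lsmul_apply, hgy _ h1]

lemma conv_pointwise_bound {G : Type*} [NormedAddCommGroup G] [NormedSpace ℝ G]
    {f : E → ℝ} (hfc : Continuous f) (hfnn : ∀ t, 0 ≤ f t)
    {M ε : ℝ} (hM : 0 ≤ M) (hε : 0 < ε) (hfM : ∀ t, f t ≤ M)
    (hfsupp : Function.support f ⊆ Metric.ball 0 ε)
    {g : E → G} (hgc : Continuous g) {x a : E} {r : ℝ} (hr : ε ≤ r)
    (ha : a ∈ Metric.ball x (r - ε)) :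
    ‖∫ t, f t • g (a - t)‖ ≤ M * ∫ u in Metric.ball x r, ‖g u‖ := by
  have key : ∀ t : E, ‖f t • g (a - t)‖ ≤
      M * (Metric.ball a ε).indicator (fun u => ‖g u‖) (a - t) := by
    intro t
    rw [norm_smul, Real.norm_of_nonneg (hfnn t)]
    by_cases ht : f t = 0
    · simp only [ht, zero_mul]
      exact mul_nonneg hM (Set.indicator_nonneg (fun u _ => norm_nonneg _) _)
    · have htb : t ∈ Metric.ball (0 : E) ε := hfsupp ht
      have hmem : a - t ∈ Metric.ball a ε := by
        simpa [Metric.mem_ball, dist_self_sub_left] using (mem_ball_zero_iff.1 htb)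
      rw [Set.indicator_of_mem hmem]
      exact mul_le_mul_of_nonneg_right (hfM t) (norm_nonneg _)
  have hint : Integrable (fun t : E => M * (Metric.ball a ε).indicator
      (fun u => ‖g u‖) (a - t)) volume := by
    apply Integrable.const_mul
    have h1 : Integrable ((Metric.ball a ε).indicator (fun u => ‖g u‖)) volume := by
      rw [integrable_indicator_iff measurableSet_ball]
      exact ((hgc.norm.locallyIntegrable).integrableOn_isCompact
        (isCompact_closedBall a ε)).mono_set Metric.ball_subset_closedBall
    have := h1.comp_sub_left a
    exact this
  calc ‖∫ t, f t • g (a - t)‖ ≤ ∫ t, ‖f t • g (a - t)‖ := norm_integral_le_integral_norm _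
  _ ≤ ∫ t, M * (Metric.ball a ε).indicator (fun u => ‖g u‖) (a - t) := by
      apply integral_mono_of_nonneg (Filter.Eventually.of_forall fun t => norm_nonneg _) hint
      exact Filter.Eventually.of_forall key
  _ = M * ∫ t, (Metric.ball a ε).indicator (fun u => ‖g u‖) (a - t) := integral_const_mul M _
  _ = M * ∫ u, (Metric.ball a ε).indicator (fun u => ‖g u‖) u := by
      rw [integral_sub_left_eq_self _ volume a]
  _ = M * ∫ u in Metric.ball a ε, ‖g u‖ := by rw [integral_indicator measurableSet_ball]
  _ ≤ M * ∫ u in Metric.ball x r, ‖g u‖ := by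
      apply mul_le_mul_of_nonneg_left _ hM
      apply setIntegral_mono_set (((hgc.norm.locallyIntegrable).integrableOn_isCompact
          (isCompact_closedBall x r)).mono_set Metric.ball_subset_closedBall)
        (Filter.Eventually.of_forall fun u => norm_nonneg _)
      apply HasSubset.Subset.eventuallyLE
      intro u hu
      have h1 : dist u a < ε := hu
      have h2 : dist a x < r - ε := ha
      have : dist u x < r := by
        calc dist u x ≤ dist u a + dist a x := dist_triangle u a x
        _ < ε + (r - ε) := add_lt_add h1 h2
        _ = r := by ring
      exact this

lemma lintegral_jensen {α : Type*} [MeasurableSpace α] (μ : Measure α) {p : ℝ} (hp : 1 ≤ p)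
    {h : α → ℝ≥0∞} (hm : AEMeasurable h μ) :
    (∫⁻ a, h a ∂μ) ^ p ≤ (μ Set.univ) ^ (p - 1) * ∫⁻ a, h a ^ p ∂μ := by
  rcases eq_or_lt_of_le hp with hp1 | hp1
  · simp [← hp1]
  · set q : ℝ := Real.conjExponent p
    have hpq : p.HolderConjugate q := Real.HolderConjugate.conjExponent hp1
    have hone : AEMeasurable (fun _ : α => (1 : ℝ≥0∞)) μ := aemeasurable_const
    have key := ENNReal.lintegral_mul_le_Lp_mul_Lq μ hpq hm hone
    simp only [Pi.mul_apply, mul_one, ENNReal.one_rpow, lintegral_const, one_mul] at key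
    have hkey2 := ENNReal.rpow_le_rpow key (le_of_lt hpq.pos)
    calc (∫⁻ a, h a ∂μ) ^ p
        ≤ ((∫⁻ a, h a ^ p ∂μ) ^ (1 / p) * (μ Set.univ) ^ (1 / q)) ^ p := hkey2
    _ = (∫⁻ a, h a ^ p ∂μ) * (μ Set.univ) ^ (p - 1) := by
        rw [ENNReal.mul_rpow_of_nonneg _ _ (le_of_lt hpq.pos), ← ENNReal.rpow_mul,
          ← ENNReal.rpow_mul, one_div_mul_cancel (ne_of_gt hpq.pos), ENNReal.rpow_one]
        congr 1
        have : 1 / q = 1 - 1 / p := by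
          have := hpq.inv_add_inv_eq_one
          rw [one_div, one_div]
          linarith
        rw [this]
        congr 1
        field_simp
    _ = (μ Set.univ) ^ (p - 1) * ∫⁻ a, h a ^ p ∂μ := mul_comm _ _

lemma fubini_ball_bound {U : Set E} (hU : MeasurableSet U) {r : ℝ} (hr : 0 < r)
    {h : E → ℝ≥0∞} (hm : Measurable h) :
    ∫⁻ x in U, ∫⁻ z in Metric.ball x r, h z ∂volume ∂volume
      ≤ volume (Metric.ball (0 : E) r) * ∫⁻ z in U + Metric.ball 0 r, h z ∂volume := by
  set V : Set E := U + Metric.ball 0 r with hV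
  have hVopen : IsOpen V := by
    rw [hV]
    exact Metric.isOpen_ball.add_left
  have step1 : ∫⁻ x in U, ∫⁻ z in Metric.ball x r, h z ∂volume ∂volume
      = ∫⁻ z, h z * (volume.restrict U) (Metric.ball z r) ∂volume := by
    have : ∀ x : E, ∫⁻ z in Metric.ball x r, h z ∂volume
        = ∫⁻ z, Set.indicator {q : E × E | dist q.2 q.1 < r} (fun q => h q.2) (x, z) ∂volume := by
      intro x
      rw [← lintegral_indicator measurableSet_ball]
      congr 1
    simp_rw [this]
    rw [lintegral_lintegral_swap]
    · congr 1
      funext z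
      have : ∀ x : E, Set.indicator {q : E × E | dist q.2 q.1 < r} (fun q => h q.2) (x, z)
          = (Metric.ball z r).indicator (fun _ => h z) x := by
        intro x
        have hiff : (x, z) ∈ {q : E × E | dist q.2 q.1 < r} ↔ x ∈ Metric.ball z r := by
          simp [Metric.mem_ball, Set.mem_setOf_eq, dist_comm]
        by_cases hx : x ∈ Metric.ball z r
        · rw [Set.indicator_of_mem (hiff.2 hx), Set.indicator_of_mem hx]
        · rw [Set.indicator_of_notMem (fun hc => hx (hiff.1 hc)), Set.indicator_of_notMem hx]
      simp_rw [this]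
      rw [lintegral_indicator measurableSet_ball, setLIntegral_const]
    · apply AEMeasurable.indicator
      · exact (hm.comp measurable_snd).aemeasurable
      · have : IsOpen {q : E × E | dist q.2 q.1 < r} :=
          isOpen_lt (continuous_dist.comp (continuous_snd.prodMk continuous_fst)) continuous_const
        exact this.measurableSet
  rw [step1]
  have step2 : ∀ z : E, h z * (volume.restrict U) (Metric.ball z r)
      ≤ V.indicator (fun _ => volume (Metric.ball (0 : E) r) ) z * h z := by
    intro z
    by_cases hz : z ∈ V
    · rw [Set.indicator_of_mem hz, mul_comm (h z)]
      apply mul_le_mul_left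
      calc (volume.restrict U) (Metric.ball z r) ≤ volume (Metric.ball z r) :=
            Measure.restrict_le_self _
      _ = volume (Metric.ball (0 : E) r) := Measure.addHaar_ball_center volume z r
    · rw [Set.indicator_of_notMem hz, zero_mul]
      have : (volume.restrict U) (Metric.ball z r) = 0 := by
        rw [Measure.restrict_apply measurableSet_ball]
        have : Metric.ball z r ∩ U = ∅ := by
          ext x
          simp only [Set.mem_inter_iff, Set.mem_empty_iff_false, iff_false, not_and]
          intro hx hxU
          apply hz
          have : z = x + (z - x) := by abel
          rw [hV, this]
          have h2 : ‖z - x‖ < r := by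
            rw [← dist_eq_norm, dist_comm]
            exact Metric.mem_ball.1 hx
          exact Set.add_mem_add hxU (mem_ball_zero_iff.2 h2)
        rw [this]
        exact measure_empty
      rw [this, mul_zero]
  calc ∫⁻ z, h z * (volume.restrict U) (Metric.ball z r) ∂volume
      ≤ ∫⁻ z, V.indicator (fun _ => volume (Metric.ball (0 : E) r)) z * h z ∂volume :=
        lintegral_mono step2
  _ = ∫⁻ z, V.indicator (fun w => volume (Metric.ball (0 : E) r) * h w) z ∂volume := by
      congr 1
      funext z
      by_cases hz : z ∈ V
      · rw [Set.indicator_of_mem hz, Set.indicator_of_mem hz]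
      · rw [Set.indicator_of_notMem hz, Set.indicator_of_notMem hz, zero_mul]
  _ = ∫⁻ z in V, volume (Metric.ball (0 : E) r) * h z ∂volume :=
      lintegral_indicator hVopen.measurableSet _
  _ = volume (Metric.ball (0 : E) r) * ∫⁻ z in V, h z ∂volume :=
      lintegral_const_mul _ hm

end
section
noncomputable section
open MeasureTheory
open scoped Pointwise ENNReal Convolution

/-- **Mollification approximation estimate** (Proposition `prop:approximation1`).
For any `Rad > 0`, `d ∈ ℕ`, `p ≥ 1` and any fixed standard mollifier `η` there is a constant
`C = C(Rad, d, p) > 0` (independent of `k`) such that for every `k ∈ ℕ`, every measurable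
`U ⊂ ℝ^d`, every `ε > 0`, and every `y ∈ C^k(ℝ^d; ℝ^d)` with `∇^k y` `p`-integrable on
`U + B_{(Rad+1)ε}(0)`:
`‖ x ↦ ‖∇^k (y ∗ η_ε)‖_{L^∞(B_{ε·Rad}(x))} ‖_{L^p(U)} ≤ C ‖∇^k y‖_{L^p(U + B_{(Rad+1)ε}(0))}`,
where `η_ε(x) = ε^{−d} η(x/ε)` and `(y ∗ η_ε)(x) = ∫ η_ε(t) y(x−t) dt`. -/
theorem mollification_approximation_estimate
    (d : ℕ) (hd : 0 < d) (Rad : ℝ) (hRad : 0 < Rad) (p : ℝ) (hp : 1 ≤ p)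
    (η : EuclideanSpace ℝ (Fin d) → ℝ)
    (hηsmooth : ContDiff ℝ (⊤ : ℕ∞) η) (hηnonneg : ∀ x, 0 ≤ η x)
    (hηsupp : tsupport η ⊆ Metric.ball 0 1) (hηint : ∫ x, η x = 1) :
    ∃ C > (0 : ℝ), ∀ (k : ℕ) (U : Set (EuclideanSpace ℝ (Fin d))), MeasurableSet U →
      ∀ ε > (0 : ℝ), ∀ y : EuclideanSpace ℝ (Fin d) → EuclideanSpace ℝ (Fin d),
        ContDiff ℝ k y →
        MemLp (iteratedFDeriv ℝ k y) (ENNReal.ofReal p)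
          (volume.restrict (U + Metric.ball 0 ((Rad + 1) * ε))) →
        eLpNorm
            (fun x => sSup ((fun a =>
              ‖iteratedFDeriv ℝ k
                (fun z => ∫ t, ((ε ^ d)⁻¹ * η ((ε⁻¹ : ℝ) • t)) • y (z - t)) a‖) ''
                Metric.ball x (ε * Rad)))
            (ENNReal.ofReal p) (volume.restrict U)
          ≤ ENNReal.ofReal C *
            eLpNorm (iteratedFDeriv ℝ k y) (ENNReal.ofReal p)
              (volume.restrict (U + Metric.ball 0 ((Rad + 1) * ε))) := by
  haveI : Nonempty (Fin d) := ⟨⟨0, hd⟩⟩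
  -- bound for η
  have hηcs : HasCompactSupport η :=
    HasCompactSupport.of_support_subset_isCompact (isCompact_closedBall (0 : EuclideanSpace ℝ (Fin d)) 1)
      ((subset_tsupport η).trans (hηsupp.trans Metric.ball_subset_closedBall))
  obtain ⟨Cη0, hCη0⟩ := hηcs.exists_bound_of_continuous hηsmooth.continuous
  set Cη : ℝ := max Cη0 1 with hCηdef
  have hCη1 : (1 : ℝ) ≤ Cη := le_max_right _ _
  have hCηpos : 0 < Cη := lt_of_lt_of_le one_pos hCη1
  have hCη : ∀ t, η t ≤ Cη := fun t =>
    (le_abs_self _).trans ((hCη0 t).trans (le_max_left _ _))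
  -- volume of unit ball
  set B1 : ℝ≥0∞ := volume (Metric.ball (0 : EuclideanSpace ℝ (Fin d)) 1) with hB1def
  have hB1top : B1 ≠ ⊤ := measure_ball_lt_top.ne
  set C : ℝ := Cη * (Rad + 1) ^ d * B1.toReal + 1 with hCdef
  have hCpos : 0 < C := by positivity
  refine ⟨C, hCpos, ?_⟩
  intro k U hU ε hε y hy _hmem
  set r : ℝ := (Rad + 1) * ε with hrdef
  have hr : 0 < r := by positivity
  have hεr : ε ≤ r := by nlinarith
  set V : Set (EuclideanSpace ℝ (Fin d)) := U + Metric.ball 0 r with hVdef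
  set f : EuclideanSpace ℝ (Fin d) → ℝ := fun t => (ε ^ d)⁻¹ * η ((ε⁻¹ : ℝ) • t) with hfdef
  set M : ℝ := (ε ^ d)⁻¹ * Cη with hMdef
  have hM : 0 ≤ M := by positivity
  have hfc : Continuous f :=
    continuous_const.mul (hηsmooth.continuous.comp (continuous_const_smul _))
  have hfnn : ∀ t, 0 ≤ f t := fun t => by
    have := hηnonneg ((ε⁻¹ : ℝ) • t)
    positivity
  have hfM : ∀ t, f t ≤ M := fun t =>
    mul_le_mul_of_nonneg_left (hCη _) (by positivity)
  have hfsupp : Function.support f ⊆ Metric.ball 0 ε := by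
    intro t ht
    have hη0 : η ((ε⁻¹ : ℝ) • t) ≠ 0 := by
      intro hc
      exact ht (by simp [hfdef, hc])
    have : (ε⁻¹ : ℝ) • t ∈ Metric.ball (0 : EuclideanSpace ℝ (Fin d)) 1 :=
      hηsupp (subset_tsupport η hη0)
    rw [mem_ball_zero_iff] at this ⊢
    rw [norm_smul, Real.norm_eq_abs, abs_of_pos (inv_pos.2 hε)] at this
    calc ‖t‖ = ε * (ε⁻¹ * ‖t‖) := by field_simp
    _ < ε * 1 := by exact mul_lt_mul_of_pos_left this hε
    _ = ε := mul_one ε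
  have hcf : HasCompactSupport f :=
    HasCompactSupport.of_support_subset_isCompact (isCompact_closedBall (0 : EuclideanSpace ℝ (Fin d)) ε)
      (hfsupp.trans Metric.ball_subset_closedBall)
  have hgc : Continuous (iteratedFDeriv ℝ k y) := hy.continuous_iteratedFDeriv le_rfl
  have hconv : (fun z => ∫ t, ((ε ^ d)⁻¹ * η ((ε⁻¹ : ℝ) • t)) • y (z - t))
      = f ⋆[ContinuousLinearMap.lsmul ℝ ℝ, volume] y := rfl
  set pE := ENNReal.ofReal p with hpEdef
  have hppos : 0 < p := lt_of_lt_of_le one_pos hp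
  have hp0 : pE ≠ 0 := by
    rw [hpEdef, Ne, ENNReal.ofReal_eq_zero]
    push_neg
    exact hppos
  have hptop : pE ≠ ⊤ := ENNReal.ofReal_ne_top
  have hpE : pE.toReal = p := ENNReal.toReal_ofReal hppos.le
  set h : EuclideanSpace ℝ (Fin d) → ℝ≥0∞ :=
    fun z => ENNReal.ofReal ‖iteratedFDeriv ℝ k y z‖ with hhdef
  have hhm : Measurable h := hgc.norm.measurable.ennreal_ofReal
  set volB : ℝ≥0∞ := volume (Metric.ball (0 : EuclideanSpace ℝ (Fin d)) r) with hvolBdef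
  have hvolB0 : volB ≠ 0 := (Metric.measure_ball_pos volume 0 hr).ne'
  have hvolBtop : volB ≠ ⊤ := measure_ball_lt_top.ne
  set bound : EuclideanSpace ℝ (Fin d) → ℝ :=
    fun x => M * ∫ u in Metric.ball x r, ‖iteratedFDeriv ℝ k y u‖ with hbounddef
  have hbnn : ∀ x, 0 ≤ bound x := fun x =>
    mul_nonneg hM (integral_nonneg fun u => norm_nonneg _)
  have hgint : ∀ (c : EuclideanSpace ℝ (Fin d)) (ρ : ℝ),
      IntegrableOn (fun u => ‖iteratedFDeriv ℝ k y u‖) (Metric.ball c ρ) volume := fun c ρ =>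
    ((hgc.norm.locallyIntegrable).integrableOn_isCompact
      (isCompact_closedBall c ρ)).mono_set Metric.ball_subset_closedBall
  have hmain : ∀ x : EuclideanSpace ℝ (Fin d), sSup ((fun a =>
      ‖iteratedFDeriv ℝ k
        (fun z => ∫ t, ((ε ^ d)⁻¹ * η ((ε⁻¹ : ℝ) • t)) • y (z - t)) a‖) ''
        Metric.ball x (ε * Rad)) ≤ bound x := by
    intro x
    apply Real.sSup_le _ (hbnn x)
    rintro v ⟨a, ha, rfl⟩
    have heq : (fun a => ‖iteratedFDeriv ℝ k
        (fun z => ∫ t, ((ε ^ d)⁻¹ * η ((ε⁻¹ : ℝ) • t)) • y (z - t)) a‖) a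
        = ‖(f ⋆[ContinuousLinearMap.lsmul ℝ ℝ, volume] iteratedFDeriv ℝ k y) a‖ := by
      simp only [hconv, itFD_conv_point k hfc hcf hy a]
    rw [heq]
    have ha' : a ∈ Metric.ball x (r - ε) := by
      have hre : r - ε = ε * Rad := by rw [hrdef]; ring
      rwa [hre]
    have hpb := conv_pointwise_bound hfc hfnn hM hε hfM hfsupp hgc hεr ha'
    rw [convolution_def]
    simpa [ContinuousLinearMap.lsmul_apply] using hpb
  have step0 : eLpNorm (fun x => sSup ((fun a =>
      ‖iteratedFDeriv ℝ k
        (fun z => ∫ t, ((ε ^ d)⁻¹ * η ((ε⁻¹ : ℝ) • t)) • y (z - t)) a‖) ''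
        Metric.ball x (ε * Rad))) pE (volume.restrict U)
      ≤ eLpNorm bound pE (volume.restrict U) := by
    apply eLpNorm_mono
    intro x
    have hnn : 0 ≤ sSup ((fun a =>
        ‖iteratedFDeriv ℝ k
          (fun z => ∫ t, ((ε ^ d)⁻¹ * η ((ε⁻¹ : ℝ) • t)) • y (z - t)) a‖) ''
          Metric.ball x (ε * Rad)) := by
      apply Real.sSup_nonneg
      rintro v ⟨a, _, rfl⟩
      exact norm_nonneg _
    rw [Real.norm_of_nonneg hnn, Real.norm_of_nonneg (hbnn x)]
    exact hmain x
  have hcore : eLpNorm bound pE (volume.restrict U)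
      ≤ (ENNReal.ofReal M * volB) * eLpNorm (iteratedFDeriv ℝ k y) pE (volume.restrict V) := by
    rw [eLpNorm_eq_lintegral_rpow_enorm_toReal hp0 hptop, eLpNorm_eq_lintegral_rpow_enorm_toReal hp0 hptop,
      hpE]
    have hb1 : ∀ x : EuclideanSpace ℝ (Fin d), ((‖bound x‖₊ : ℝ≥0∞)) ^ p
        = (ENNReal.ofReal M * ∫⁻ z in Metric.ball x r, h z ∂volume) ^ p := by
      intro x
      congr 1
      rw [← enorm_eq_nnnorm, Real.enorm_eq_ofReal (hbnn x), hbounddef]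
      rw [ENNReal.ofReal_mul hM,
        ofReal_integral_eq_lintegral_ofReal (hgint x r)
          (Filter.Eventually.of_forall fun u => norm_nonneg _)]
    have hMtop : (ENNReal.ofReal M) ^ p ≠ ⊤ :=
      ENNReal.rpow_ne_top_of_nonneg hppos.le ENNReal.ofReal_ne_top
    have hvolBptop : volB ^ (p - 1) ≠ ⊤ :=
      ENNReal.rpow_ne_top_of_nonneg (by linarith) hvolBtop
    have key : ∫⁻ x in U, ((‖bound x‖₊ : ℝ≥0∞)) ^ p ∂volume
        ≤ (ENNReal.ofReal M) ^ p * (volB ^ (p - 1) * (volB * ∫⁻ z in V, h z ^ p ∂volume)) := by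
      calc ∫⁻ x in U, ((‖bound x‖₊ : ℝ≥0∞)) ^ p ∂volume
          = ∫⁻ x in U, (ENNReal.ofReal M * ∫⁻ z in Metric.ball x r, h z ∂volume) ^ p ∂volume :=
            lintegral_congr fun x => hb1 x
      _ ≤ ∫⁻ x in U, (ENNReal.ofReal M) ^ p *
            (volB ^ (p - 1) * ∫⁻ z in Metric.ball x r, h z ^ p ∂volume) ∂volume := by
          apply lintegral_mono
          intro x
          change (ENNReal.ofReal M * ∫⁻ z in Metric.ball x r, h z ∂volume) ^ p
            ≤ (ENNReal.ofReal M) ^ p *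
              (volB ^ (p - 1) * ∫⁻ z in Metric.ball x r, h z ^ p ∂volume)
          rw [ENNReal.mul_rpow_of_nonneg _ _ hppos.le]
          apply mul_le_mul_right
          have hj := lintegral_jensen (volume.restrict (Metric.ball x r)) hp hhm.aemeasurable
          rw [Measure.restrict_apply_univ] at hj
          rw [Measure.addHaar_ball_center volume x r] at hj
          exact hj
      _ = (ENNReal.ofReal M) ^ p * (volB ^ (p - 1) *
            ∫⁻ x in U, ∫⁻ z in Metric.ball x r, h z ^ p ∂volume ∂volume) := by
          rw [lintegral_const_mul' _ _ hMtop, lintegral_const_mul' _ _ hvolBptop]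
      _ ≤ (ENNReal.ofReal M) ^ p * (volB ^ (p - 1) * (volB * ∫⁻ z in V, h z ^ p ∂volume)) := by
          apply mul_le_mul_right
          apply mul_le_mul_right
          exact fubini_ball_bound hU hr (hhm.pow_const p)
    have hrearr : (ENNReal.ofReal M) ^ p * (volB ^ (p - 1) * (volB * ∫⁻ z in V, h z ^ p ∂volume))
        = ((ENNReal.ofReal M * volB) ^ p) * ∫⁻ z in V, h z ^ p ∂volume := by
      have hBp : volB ^ (p - 1) * volB = volB ^ p := by
        have h1 : volB ^ (p - 1) * volB ^ (1 : ℝ) = volB ^ (p - 1 + 1) :=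
          (ENNReal.rpow_add _ _ hvolB0 hvolBtop).symm
        rw [ENNReal.rpow_one] at h1
        rw [h1]
        norm_num
      rw [ENNReal.mul_rpow_of_nonneg _ _ hppos.le, ← hBp]
      ring
    rw [hrearr] at key
    calc (∫⁻ x in U, ((‖bound x‖₊ : ℝ≥0∞)) ^ p ∂volume) ^ (1 / p)
        ≤ (((ENNReal.ofReal M * volB) ^ p) * ∫⁻ z in V, h z ^ p ∂volume) ^ (1 / p) :=
          ENNReal.rpow_le_rpow key (by positivity)
    _ = (ENNReal.ofReal M * volB) * (∫⁻ z in V, h z ^ p ∂volume) ^ (1 / p) := by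
        rw [ENNReal.mul_rpow_of_nonneg _ _ (by positivity), ← ENNReal.rpow_mul,
          mul_one_div_cancel hppos.ne', ENNReal.rpow_one]
    _ = (ENNReal.ofReal M * volB) *
          (∫⁻ z in V, ((‖iteratedFDeriv ℝ k y z‖₊ : ℝ≥0∞)) ^ p ∂volume) ^ (1 / p) := by
        congr 1
        congr 1
        apply lintegral_congr
        intro z
        simp only [hhdef, ofReal_norm_eq_enorm, enorm_eq_nnnorm]
  have hconst : ENNReal.ofReal M * volB ≤ ENNReal.ofReal C := by
    haveI : Nontrivial (EuclideanSpace ℝ (Fin d)) :=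
      Module.nontrivial_of_finrank_pos (R := ℝ) (by rw [finrank_euclideanSpace_fin]; exact hd)
    rw [hvolBdef,
      Measure.addHaar_ball (volume : Measure (EuclideanSpace ℝ (Fin d))) 0 hr.le,
      finrank_euclideanSpace_fin]
    rw [← mul_assoc, ← ENNReal.ofReal_mul hM]
    have hMr : M * r ^ d = Cη * (Rad + 1) ^ d := by
      rw [hMdef, hrdef, mul_pow]
      field_simp
    rw [hMr, ← hB1def, ← ENNReal.ofReal_toReal hB1top, ← ENNReal.ofReal_mul (by positivity)]
    apply ENNReal.ofReal_le_ofReal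
    rw [hCdef]
    nlinarith [ENNReal.toReal_nonneg (a := B1)]
  calc eLpNorm (fun x => sSup ((fun a =>
          ‖iteratedFDeriv ℝ k
            (fun z => ∫ t, ((ε ^ d)⁻¹ * η ((ε⁻¹ : ℝ) • t)) • y (z - t)) a‖) ''
            Metric.ball x (ε * Rad))) pE (volume.restrict U)
      ≤ eLpNorm bound pE (volume.restrict U) := step0
  _ ≤ (ENNReal.ofReal M * volB) * eLpNorm (iteratedFDeriv ℝ k y) pE (volume.restrict V) := hcore
  _ ≤ ENNReal.ofReal C * eLpNorm (iteratedFDeriv ℝ k y) pE (volume.restrict V) :=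
      mul_le_mul_left hconst _
end
end
end
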